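/- MacMahon's second rule: for a positive integer s, the generating function Σ over pairs (a,b) of non-negative integers with s·a - b ≥ 0 of x^a y^b equals (1 + x·y·(1 - y^{s-1})/(1 - y)) / ((1 - x)(1 - x y^s)) as formal power series; equivalently it equals (1 + Σ_{i=1}^{s-1} x y^i) / ((1 - x)(1 - x y^s)). -/

import Mathlib

/-- The generating function of all pairs `(a,b)` of non-negative integers with
`s·a - b ≥ 0`, as a formal power series in two variables. -/
def macmahon2Series (s : ℕ) : MvPowerSeries (Fin 2) ℚ :=
  fun d => if d 1 ≤ s * d 0 then 1 else 0

open MvPowerSeries Finsupp in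
lemma fin2_le (d : Fin 2 →₀ ℕ) (u v : ℕ) : (single 0 u + single 1 v ≤ d) ↔ u ≤ d 0 ∧ v ≤ d 1 := by
  rw [Finsupp.le_def]
  constructor
  · intro h; exact ⟨by simpa using h 0, by simpa using h 1⟩
  · rintro ⟨h0, h1⟩ i; fin_cases i <;> simp [h0, h1]

open Finsupp in
lemma fin2_eq (d : Fin 2 →₀ ℕ) (u v : ℕ) : (d = single 0 u + single 1 v) ↔ d 0 = u ∧ d 1 = v := by
  constructor
  · rintro rfl; simp
  · rintro ⟨h0, h1⟩; ext i; fin_cases i <;> simp [h0, h1]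

lemma fin2_eq0 (d : Fin 2 →₀ ℕ) : (d = 0) ↔ d 0 = 0 ∧ d 1 = 0 := by
  constructor
  · rintro rfl; simp
  · rintro ⟨h0, h1⟩; ext i; fin_cases i <;> simp [h0, h1]

set_option maxHeartbeats 1600000 in
lemma macmahon_key (s a b : ℕ) (hs : 0 < s) :
    (if b ≤ s * a then (1:ℚ) else 0)
    - (if 1 ≤ a then (if b ≤ s * (a-1) then (1:ℚ) else 0) else 0)
    - (if 1 ≤ a ∧ s ≤ b then (if b - s ≤ s * (a-1) then (1:ℚ) else 0) else 0)
    + (if 2 ≤ a ∧ s ≤ b then (if b - s ≤ s * (a-2) then (1:ℚ) else 0) else 0)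
    = (if a = 0 ∧ b = 0 then (1:ℚ) else 0)
    + (if 1 ≤ b ∧ b < s then (if a = 1 then (1:ℚ) else 0) else 0) := by
  match a with
  | 0 =>
    rw [show s * 0 = 0 by ring]
    split_ifs <;> first | (exfalso; first | assumption | omega | exact (And.left ‹False ∧ _›)) | norm_num
  | 1 =>
    rw [show s * 1 = s by ring, show s * (1-1) = 0 by simp]
    split_ifs <;> first | (exfalso; first | assumption | omega | exact (And.left ‹False ∧ _›)) | norm_num
  | (a+2) =>
    rw [show s * (a + 2) = s * a + s + s by ring,
      show s * (a + 2 - 1) = s * a + s by rw [show a + 2 - 1 = a + 1 from rfl]; ring,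
      show s * (a + 2 - 2) = s * a by rw [show a + 2 - 2 = a from rfl]]
    generalize s * a = m
    split_ifs <;> first | (exfalso; first | assumption | omega | exact (And.left ‹False ∧ _›)) | norm_num

open MvPowerSeries Finsupp in
/-- MacMahon's second rule: `Σ_{s a ≥ b} x^a y^b
  = (1 + Σ_{i=1}^{s-1} x y^i)/((1-x)(1-x y^s))` as formal power series. -/
theorem macmahon_second_rule (s : ℕ) (hs : 0 < s) :
    macmahon2Series s *
      ((1 - MvPowerSeries.X 0) * (1 - MvPowerSeries.X 0 * (MvPowerSeries.X 1) ^ s)) =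
    1 + ∑ i ∈ Finset.Ico 1 s, MvPowerSeries.X 0 * (MvPowerSeries.X 1) ^ i := by
  have hexp : macmahon2Series s *
      ((1 - MvPowerSeries.X 0) * (1 - MvPowerSeries.X 0 * (MvPowerSeries.X 1) ^ s)) =
      macmahon2Series s
      - macmahon2Series s * monomial (single 0 1) 1
      - macmahon2Series s * monomial (single 0 1 + single 1 s) 1
      + macmahon2Series s * monomial (single 0 2 + single 1 s) 1 := by
    rw [show (monomial (single 0 1) 1 : MvPowerSeries (Fin 2) ℚ) = X 0 from (X_def 0).symm,
      show (monomial (single 0 1 + single 1 s) 1 : MvPowerSeries (Fin 2) ℚ) = X 0 * X 1 ^ s by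
        rw [X_def, X_pow_eq, monomial_mul_monomial, one_mul],
      show (monomial (single 0 2 + single 1 s) 1 : MvPowerSeries (Fin 2) ℚ) = X 0 ^ 2 * X 1 ^ s by
        rw [X_pow_eq, X_pow_eq, monomial_mul_monomial, one_mul]]
    ring
  rw [hexp]
  ext d
  rw [map_add, map_sub, map_sub, map_add, map_sum]
  rw [coeff_mul_monomial, coeff_mul_monomial, coeff_mul_monomial, coeff_one]
  have hc : ∀ e : Fin 2 →₀ ℕ, MvPowerSeries.coeff e (macmahon2Series s)
      = if e 1 ≤ s * e 0 then (1:ℚ) else 0 := fun e => rfl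
  have hsum : ∑ i ∈ Finset.Ico 1 s,
      MvPowerSeries.coeff d (MvPowerSeries.X 0 * MvPowerSeries.X 1 ^ i)
      = if 1 ≤ d 1 ∧ d 1 < s then (if d 0 = 1 then (1:ℚ) else 0) else 0 := by
    have h1 : ∀ i ∈ Finset.Ico 1 s, MvPowerSeries.coeff d (MvPowerSeries.X 0 * MvPowerSeries.X 1 ^ i)
        = if i = d 1 then (if d 0 = 1 then (1:ℚ) else 0) else 0 := by
      intro i _
      rw [show (MvPowerSeries.X 0 * MvPowerSeries.X 1 ^ i : MvPowerSeries (Fin 2) ℚ)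
          = monomial (single 0 1 + single 1 i) 1 by
        rw [X_def, X_pow_eq, monomial_mul_monomial, one_mul]]
      rw [coeff_monomial]
      simp only [fin2_eq]
      by_cases h1 : i = d 1 <;> by_cases h2 : d 0 = 1 <;> simp [h1, h2] <;> omega
    rw [Finset.sum_congr rfl h1, Finset.sum_ite_eq' (Finset.Ico 1 s) (d 1)]
    simp [Finset.mem_Ico]
  rw [hsum]
  have key := macmahon_key s (d 0) (d 1) hs
  simp only [hc, mul_one, Finsupp.single_le_iff, fin2_le, fin2_eq0, Finsupp.tsub_apply,
    Finsupp.add_apply, Finsupp.single_apply, if_true, if_false]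
  norm_num
  simpa only [tsub_le_iff_right] using key
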